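/- arXiv:quant-ph/0404148 — 2 statements merged into one kernel-verified Lean document; each statement's English description precedes it below -/
import Mathlib

section
/- For any n-dimensional probability vector y, M(y) ⊆ T(y). That is, if x^{⊗k} ≺ y^{⊗k} for some integer k ≥ 1, then there exists a probability vector c (of some finite dimension) such that x ⊗ c ≺ y ⊗ c. -/
/-!
Suppose `x^{⊗(k+1)} ≺ y^{⊗(k+1)}` and put `z_j = x^{⊗j} ⊗ y^{⊗(k+1-j)}`. The catalyst is
`c = (1/(k+1)) ⊕_{j=0}^{k} x^{⊗j} ⊗ y^{⊗(k-j)}`: putting the new factor of `x ⊗ c` in front and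
that of `y ⊗ c` at the back, `x ⊗ c` and `y ⊗ c` are, up to permutations,
`(1/(k+1)) ⊕_{j=1}^{k+1} z_j` and `(1/(k+1)) ⊕_{j=0}^{k} z_j`. These share the blocks
`0 < j ≤ k` and differ only in `z_{k+1} = x^{⊗(k+1)}` against `z_0 = y^{⊗(k+1)}`. Majorization
is invariant under scaling and under permuting each side separately, and it survives appending
a common block, so `x ⊗ c ≺ y ⊗ c`.
-/

open Finset

variable {ι κ : Type*}

/-- `eSum x l` is the sum of the `l` largest components of `x`. -/
noncomputable def eSum [Fintype ι] (x : ι → ℝ) (l : ℕ) : ℝ :=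
  sSup {r : ℝ | ∃ s : Finset ι, s.card = l ∧ r = ∑ i ∈ s, x i}

/-- Majorization `x ≺ y` for vectors over the same (finite) index type:
`e_l(x) ≤ e_l(y)` for all `1 ≤ l ≤ n - 1`, with equal total sums. -/
def Maj [Fintype ι] (x y : ι → ℝ) : Prop :=
  (∀ l : ℕ, 1 ≤ l → l < Fintype.card ι → eSum x l ≤ eSum y l) ∧
    ∑ i, x i = ∑ i, y i

/-- A probability vector: nonnegative components summing to 1. -/
def IsProbVec [Fintype ι] (x : ι → ℝ) : Prop :=
  (∀ i, 0 ≤ x i) ∧ ∑ i, x i = 1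

/-- Kronecker product of two vectors. -/
def kron (x : ι → ℝ) (c : κ → ℝ) : ι × κ → ℝ := fun p => x p.1 * c p.2

/-- `k`-fold Kronecker power of a vector. -/
def kpow (x : ι → ℝ) (k : ℕ) : (Fin k → ι) → ℝ := fun f => ∏ j, x (f j)

/-- Direct sum (concatenation) of two vectors. -/
def dsum (x : ι → ℝ) (c : κ → ℝ) : ι ⊕ κ → ℝ := Sum.elim x c

/-- `k`-fold direct sum (concatenation) of `x` with itself. -/
def dpow (x : ι → ℝ) (k : ℕ) : Fin k × ι → ℝ := fun p => x p.2

/-- `x ∈ S°(y)`: all partial-sum inequalities `e_l(x) < e_l(y)` are strict for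
`1 ≤ l ≤ n - 1`, and the total sums coincide. -/
def InteriorS [Fintype ι] (x y : ι → ℝ) : Prop :=
  (∀ l : ℕ, 1 ≤ l → l < Fintype.card ι → eSum x l < eSum y l) ∧
    ∑ i, x i = ∑ i, y i

/-- `d_x`: the number of nonzero components of `x`. -/
noncomputable def dsupp (x : ι → ℝ) : ℕ := Nat.card (Function.support x)

/-- The `α`-Renyi entropy `S^{(α)}(x)`; at `α = 1` it is the Shannon entropy. -/
noncomputable def renyi [Fintype ι] (x : ι → ℝ) (α : ℝ) : ℝ :=
  if α = 1 then -∑ i, x i * Real.logb 2 (x i)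
  else (if 0 ≤ α then (1 : ℝ) else -1) / (1 - α) *
    Real.logb 2 (∑ i, if x i = 0 then 0 else x i ^ α)

/-- The Renyi entropy of `x` is not less than that of `y`. -/
def RenyiGE [Fintype ι] [Fintype κ] (x : ι → ℝ) (y : κ → ℝ) : Prop :=
  (dsupp x > dsupp y ∧ ∀ α : ℝ, 0 ≤ α → renyi y α ≤ renyi x α) ∨
  (dsupp x = dsupp y ∧ ∀ α : ℝ, renyi y α ≤ renyi x α)

section eSum

variable [Fintype ι] [Fintype κ]

lemma finite_partialSums (x : ι → ℝ) (l : ℕ) :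
    {r : ℝ | ∃ s : Finset ι, s.card = l ∧ r = ∑ i ∈ s, x i}.Finite :=
  (Set.finite_range fun s : Finset ι => ∑ i ∈ s, x i).subset <| by
    rintro _ ⟨s, -, rfl⟩
    exact ⟨s, rfl⟩

lemma sum_le_eSum (x : ι → ℝ) (s : Finset ι) : ∑ i ∈ s, x i ≤ eSum x s.card :=
  le_csSup (finite_partialSums x _).bddAbove ⟨s, rfl, rfl⟩

lemma exists_eSum_eq_sum (x : ι → ℝ) {l : ℕ} (hl : l ≤ Fintype.card ι) :
    ∃ s : Finset ι, s.card = l ∧ eSum x l = ∑ i ∈ s, x i := by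
  obtain ⟨t, -, ht⟩ := exists_subset_card_eq (s := (univ : Finset ι)) (by simpa using hl)
  obtain ⟨s, hs, he⟩ : eSum x l ∈ {r : ℝ | ∃ s : Finset ι, s.card = l ∧ r = ∑ i ∈ s, x i} :=
    Set.Nonempty.csSup_mem ⟨_, t, ht, rfl⟩ (finite_partialSums x l)
  exact ⟨s, hs, he⟩

lemma eSum_zero (x : ι → ℝ) : eSum x 0 = 0 := by
  obtain ⟨s, hs, he⟩ := exists_eSum_eq_sum x (Nat.zero_le _)
  rw [he, card_eq_zero.1 hs, sum_empty]

lemma eSum_card (x : ι → ℝ) : eSum x (Fintype.card ι) = ∑ i, x i := by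
  obtain ⟨s, hs, he⟩ := exists_eSum_eq_sum x le_rfl
  rw [he, eq_univ_of_card s hs]

lemma eSum_of_card_lt (x : ι → ℝ) {l : ℕ} (hl : Fintype.card ι < l) : eSum x l = 0 := by
  have : {r : ℝ | ∃ s : Finset ι, s.card = l ∧ r = ∑ i ∈ s, x i} = ∅ :=
    Set.eq_empty_of_forall_notMem fun _ ⟨s, hs, _⟩ => (card_le_univ s).not_gt (hs ▸ hl)
  rw [eSum, this, Real.sSup_empty]

lemma eSum_comp_equiv (e : κ ≃ ι) (x : ι → ℝ) (l : ℕ) : eSum (x ∘ e) l = eSum x l := by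
  unfold eSum
  congr 1
  ext r
  constructor
  · rintro ⟨s, rfl, rfl⟩
    exact ⟨s.map e.toEmbedding, card_map _, by simp⟩
  · rintro ⟨s, rfl, rfl⟩
    exact ⟨s.map e.symm.toEmbedding, card_map _, by simp⟩

lemma eSum_const_mul (x : ι → ℝ) {a : ℝ} (ha : 0 ≤ a) (l : ℕ) :
    eSum (fun i => a * x i) l = a * eSum x l := by
  unfold eSum
  rw [← smul_eq_mul, ← Real.sSup_smul_of_nonneg ha]
  congr 1
  ext r
  simp [Set.mem_smul_set, mul_sum, eq_comm]

end eSum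

section Maj

variable [Fintype ι] [Fintype κ]

lemma Maj.eSum_le {a b : ι → ℝ} (h : Maj a b) (l : ℕ) : eSum a l ≤ eSum b l := by
  rcases Nat.lt_trichotomy l (Fintype.card ι) with hl | rfl | hl
  · rcases Nat.eq_zero_or_pos l with rfl | hl0
    · rw [eSum_zero, eSum_zero]
    · exact h.1 l hl0 hl
  · rw [eSum_card, eSum_card, h.2]
  · rw [eSum_of_card_lt a hl, eSum_of_card_lt b hl]

lemma Maj.comp_equiv {a b : ι → ℝ} (h : Maj a b) (e₁ e₂ : κ ≃ ι) : Maj (a ∘ e₁) (b ∘ e₂) := by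
  refine ⟨fun l hl hl' => ?_, ?_⟩
  · rw [eSum_comp_equiv, eSum_comp_equiv]
    exact h.1 l hl (Fintype.card_congr e₁ ▸ hl')
  · simp only [Function.comp_apply, Equiv.sum_comp]
    exact h.2

lemma Maj.const_mul {a b : ι → ℝ} (h : Maj a b) {r : ℝ} (hr : 0 ≤ r) :
    Maj (fun i => r * a i) (fun i => r * b i) := by
  refine ⟨fun l hl hl' => ?_, ?_⟩
  · rw [eSum_const_mul a hr, eSum_const_mul b hr]
    exact mul_le_mul_of_nonneg_left (h.1 l hl hl') hr
  · rw [← mul_sum, ← mul_sum, h.2]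

lemma Maj.dsum_right {a b : ι → ℝ} (h : Maj a b) (s : κ → ℝ) : Maj (dsum a s) (dsum b s) := by
  refine ⟨fun l _ hl => ?_, by simp [_root_.dsum, h.2]⟩
  obtain ⟨t, ht, he⟩ := exists_eSum_eq_sum (dsum a s) hl.le
  obtain ⟨u, hu, hb⟩ := exists_eSum_eq_sum b (card_le_univ t.toLeft)
  calc eSum (dsum a s) l
      = ∑ i ∈ t.toLeft, a i + ∑ j ∈ t.toRight, s j := by
        rw [he, sum_sum_eq_sum_toLeft_add_sum_toRight]; rfl
    _ ≤ eSum b t.toLeft.card + ∑ j ∈ t.toRight, s j := by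
        gcongr
        exact (sum_le_eSum a _).trans (h.eSum_le _)
    _ = ∑ i ∈ u.disjSum t.toRight, dsum b s i := by rw [sum_disjSum, hb]; rfl
    _ ≤ eSum (dsum b s) l := by
        convert sum_le_eSum (dsum b s) _
        rw [card_disjSum, hu, card_toLeft_add_card_toRight, ht]

end Maj

lemma maj_telescope [Fintype ι] (w : ℕ → ι → ℝ) (k : ℕ) (h : Maj (w (k + 1)) (w 0)) :
    Maj (fun p : Fin (k + 1) × ι => w (p.1 + 1) p.2) (fun p : Fin (k + 1) × ι => w p.1 p.2) := by
  let common : Fin k × ι → ℝ := fun p => w (p.1 + 1) p.2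
  let splitLast : Fin (k + 1) × ι ≃ ι ⊕ Fin k × ι :=
    ((finSuccEquiv' (Fin.last k)).prodCongr (Equiv.refl ι)).trans optionProdEquiv
  let splitZero : Fin (k + 1) × ι ≃ ι ⊕ Fin k × ι :=
    ((finSuccEquiv k).prodCongr (Equiv.refl ι)).trans optionProdEquiv
  have hx : dsum (w (k + 1)) common ∘ splitLast = fun p => w (p.1 + 1) p.2 := by
    rw [← Equiv.eq_comp_symm]
    funext q
    rcases q with i | ⟨j, i⟩ <;> simp [splitLast, common, dsum]
  have hy : dsum (w 0) common ∘ splitZero = fun p => w p.1 p.2 := by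
    rw [← Equiv.eq_comp_symm]
    funext q
    rcases q with i | ⟨j, i⟩ <;> simp [splitZero, common, dsum]
  rw [← hx, ← hy]
  exact (h.dsum_right common).comp_equiv splitLast splitZero

/-- `mixedPow x y k j = x^{⊗j} ⊗ y^{⊗(k-j)}` for `j ≤ k`. -/
def mixedPow (x y : ι → ℝ) (k j : ℕ) : (Fin k → ι) → ℝ :=
  fun f => ∏ i : Fin k, if (i : ℕ) < j then x (f i) else y (f i)

lemma mixedPow_self (x y : ι → ℝ) (k : ℕ) : mixedPow x y k k = kpow x k :=
  funext fun _ => prod_congr rfl fun i _ => if_pos i.isLt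

lemma mixedPow_zero (x y : ι → ℝ) (k : ℕ) : mixedPow x y k 0 = kpow y k :=
  funext fun _ => prod_congr rfl fun i _ => if_neg (Nat.not_lt_zero i)

lemma mul_mixedPow_cons (x y : ι → ℝ) (k j : ℕ) (a : ι) (g : Fin k → ι) :
    x a * mixedPow x y k j g = mixedPow x y (k + 1) (j + 1) (Fin.cons a g) := by
  simp [mixedPow, Fin.prod_univ_succ]

lemma mul_mixedPow_snoc (x y : ι → ℝ) {k j : ℕ} (hj : j ≤ k) (a : ι) (g : Fin k → ι) :
    y a * mixedPow x y k j g = mixedPow x y (k + 1) j (Fin.snoc g a) := by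
  simp [mixedPow, Fin.prod_univ_castSucc, hj, mul_comm]

lemma isProbVec_mixedPow [Fintype ι] {x y : ι → ℝ} (hx : IsProbVec x) (hy : IsProbVec y)
    (k j : ℕ) : IsProbVec (mixedPow x y k j) := by
  refine ⟨fun f => prod_nonneg fun i _ => ?_, ?_⟩
  · split_ifs
    exacts [hx.1 _, hy.1 _]
  · simp only [mixedPow]
    rw [← Fintype.prod_sum (fun (i : Fin k) a => if (i : ℕ) < j then x a else y a)]
    refine prod_eq_one fun i _ => ?_
    split_ifs
    exacts [hx.2, hy.2]

noncomputable def catalyst (x y : ι → ℝ) (k : ℕ) : Fin (k + 1) × (Fin k → ι) → ℝ :=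
  fun p => ((k : ℝ) + 1)⁻¹ * mixedPow x y k p.1 p.2

lemma isProbVec_catalyst [Fintype ι] {x y : ι → ℝ} (hx : IsProbVec x) (hy : IsProbVec y)
    (k : ℕ) : IsProbVec (catalyst x y k) := by
  refine ⟨fun p => mul_nonneg (by positivity) ((isProbVec_mixedPow hx hy _ _).1 _), ?_⟩
  simp only [catalyst, ← mul_sum, Fintype.sum_prod_type, (isProbVec_mixedPow hx hy _ _).2,
    sum_const, card_univ, Fintype.card_fin, nsmul_one]
  push_cast
  exact inv_mul_cancel₀ (by positivity)

def Equiv.prodLeftComm (α β γ : Type*) : α × β × γ ≃ β × α × γ where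
  toFun p := (p.2.1, p.1, p.2.2)
  invFun p := (p.2.1, p.1, p.2.2)
  left_inv _ := rfl
  right_inv _ := rfl

lemma maj_kron_catalyst [Fintype ι] {x y : ι → ℝ} {k : ℕ}
    (h : Maj (kpow x (k + 1)) (kpow y (k + 1))) :
    Maj (kron x (catalyst x y k)) (kron y (catalyst x y k)) := by
  let w : ℕ → (Fin (k + 1) → ι) → ℝ := fun j f => ((k : ℝ) + 1)⁻¹ * mixedPow x y (k + 1) j f
  have hw : Maj (w (k + 1)) (w 0) := by
    simpa only [w, mixedPow_self, mixedPow_zero] using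
      h.const_mul (r := ((k : ℝ) + 1)⁻¹) (by positivity)
  have hx : kron x (catalyst x y k) =
      (fun p : Fin (k + 1) × (Fin (k + 1) → ι) => w (p.1 + 1) p.2) ∘
      (Equiv.prodLeftComm _ _ _).trans ((Equiv.refl _).prodCongr (Fin.consEquiv fun _ => ι)) := by
    funext ⟨a, j, g⟩
    change x a * (_ * _) = _ * mixedPow x y (k + 1) (j + 1) (Fin.cons a g)
    rw [mul_left_comm, mul_mixedPow_cons]
  have hy : kron y (catalyst x y k) =
      (fun p : Fin (k + 1) × (Fin (k + 1) → ι) => w p.1 p.2) ∘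
      (Equiv.prodLeftComm _ _ _).trans ((Equiv.refl _).prodCongr (Fin.snocEquiv fun _ => ι)) := by
    funext ⟨a, j, g⟩
    change y a * (_ * _) = _ * mixedPow x y (k + 1) j (Fin.snoc g a)
    rw [mul_left_comm, mul_mixedPow_snoc x y (Nat.lt_succ_iff.1 j.isLt)]
  rw [hx, hy]
  exact (maj_telescope w k hw).comp_equiv _ _

lemma IsProbVec.comp_equiv [Fintype ι] [Fintype κ] {c : ι → ℝ} (hc : IsProbVec c) (e : κ ≃ ι) :
    IsProbVec (c ∘ e) :=
  ⟨fun _ => hc.1 _, by simpa only [Function.comp_apply, Equiv.sum_comp] using hc.2⟩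

lemma exists_fin_catalyst [Fintype ι] [Fintype κ] {x y : ι → ℝ} {c : κ → ℝ} (hc : IsProbVec c)
    (h : Maj (kron x c) (kron y c)) :
    ∃ (m : ℕ) (c' : Fin m → ℝ), IsProbVec c' ∧ Maj (kron x c') (kron y c') :=
  let e := (Fintype.equivFin κ).symm
  let e' := (Equiv.refl ι).prodCongr e
  ⟨_, c ∘ e, hc.comp_equiv e, h.comp_equiv e' e'⟩

/-- For any probability vector `y`, `M(y) ⊆ T(y)`: if `x^{⊗k} ≺ y^{⊗k}` for some
`k ≥ 1`, then there is a probability vector `c` (of some finite dimension) with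
`x ⊗ c ≺ y ⊗ c`. -/
theorem stmt1 {n : ℕ} (x y : Fin n → ℝ) (hx : IsProbVec x) (hy : IsProbVec y)
    (h : ∃ k : ℕ, 1 ≤ k ∧ Maj (kpow x k) (kpow y k)) :
    ∃ (m : ℕ) (c : Fin m → ℝ), IsProbVec c ∧ Maj (kron x c) (kron y c) := by
  obtain ⟨k, hk, hmaj⟩ := h
  obtain ⟨k, rfl⟩ := Nat.exists_eq_add_of_le' hk
  exact exists_fin_catalyst (isProbVec_catalyst hx hy k) (maj_kron_catalyst hmaj)
end

section
/- For any n-dimensional probability vector y, T(y) ⊆ R(y). That is, if there exists a probability vector c with x ⊗ c ≺ y ⊗ c, then the Renyi entropy of x is not less than that of y: either d_x > d_y and S^{(α)}(x) ≥ S^{(α)}(y) for all α ≥ 0, or d_x = d_y and S^{(α)}(x) ≥ S^{(α)}(y) for all real α. -/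
open Finset

variable {ι κ : Type*}

/-!
Rényi entropies of probability vectors are additive under `⊗`, so it suffices to compare
`x ⊗ c` with `y ⊗ c`. For `α ≠ 1` the entropy is a monotone function of the power sum
`∑ x_i ^ α` over the support, and for `α = 1` it is `∑ -x_i log x_i / log 2`. Karamata's
inequality (Abel summation against the secant slopes between the sorted vectors) turns
majorization into the comparison of these sums for concave or convex `t ↦ t ^ α`. For `α < 0`
the map `t ↦ t ^ α` is convex on `(0, ∞)` only, so Karamata is applied to the sorted supports,
which needs them to have the same size. For `α = 0` the summand is the indicator of `t ≠ 0`,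
still concave on `[0, ∞)`, and the resulting inequality is `d_y ≤ d_x`.
-/

namespace Finset

lemma sum_le_sum_of_card_eq_of_forall_le {α : Type*} {A B : Finset α} {f : α → ℝ}
    (hcard : #A = #B) (hAB : ∀ i ∈ A, ∀ j ∈ B, f i ≤ f j) :
    ∑ i ∈ A, f i ≤ ∑ j ∈ B, f j := by
  rcases B.eq_empty_or_nonempty with rfl | hB
  · rw [card_empty, card_eq_zero] at hcard
    simp [hcard]
  calc ∑ i ∈ A, f i ≤ #A • B.inf' hB f :=
        sum_le_card_nsmul _ _ _ fun i hi ↦ le_inf' hB _ fun j hj ↦ hAB i hi j hj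
    _ = #B • B.inf' hB f := by rw [hcard]
    _ ≤ ∑ j ∈ B, f j := card_nsmul_le_sum _ _ _ fun j hj ↦ inf'_le _ hj

lemma sum_le_sum_range_card_of_antitoneOn {a : ℕ → ℝ} {N : ℕ} (ha : AntitoneOn a (Set.Iio N))
    {t : Finset ℕ} (ht : t ⊆ range N) : ∑ k ∈ t, a k ≤ ∑ k ∈ range #t, a k := by
  have hsdiff : ∑ k ∈ t \ range #t, a k ≤ ∑ k ∈ range #t \ t, a k := by
    refine sum_le_sum_of_card_eq_of_forall_le (card_sdiff_comm (card_range _).symm) ?_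
    intro i hi j hj
    simp only [mem_sdiff, mem_range, not_lt] at hi hj
    have hiN : i < N := mem_range.1 (ht hi.1)
    exact ha ((hj.1.trans_le hi.2).trans hiN) hiN (hj.1.le.trans hi.2)
  linarith [sum_sdiff_sub_sum_sdiff (s₁ := range #t) (s₂ := t) (f := a)]

lemma eq_range_card_of_forall_le_mem {s : Finset ℕ} (hs : ∀ i ∈ s, ∀ j ≤ i, j ∈ s) :
    s = range #s := by
  have hsub : s ⊆ range #s := fun i hi ↦ by
    have : range (i + 1) ⊆ s := fun j hj ↦ hs i hi j (Nat.lt_succ_iff.1 (mem_range.1 hj))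
    have h := card_le_card this
    rw [card_range] at h
    exact mem_range.2 h
  exact eq_of_subset_of_card_le hsub (by simp)

end Finset

lemma ConvexOn.slope_le_slope {s : Set ℝ} {f : ℝ → ℝ} (hf : ConvexOn ℝ s f)
    {x₁ y₁ x₂ y₂ : ℝ} (hx₁ : x₁ ∈ s) (hy₁ : y₁ ∈ s) (hx₂ : x₂ ∈ s) (hy₂ : y₂ ∈ s)
    (hx : x₁ ≤ x₂) (hy : y₁ ≤ y₂) (h₁ : x₁ ≠ y₁) (h₂ : x₂ ≠ y₂) :
    slope f x₁ y₁ ≤ slope f x₂ y₂ := by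
  rcases ne_or_eq x₁ y₂ with h | rfl
  · calc slope f x₁ y₁ ≤ slope f x₁ y₂ := hf.slope_mono hx₁ ⟨hy₁, h₁.symm⟩ ⟨hy₂, h.symm⟩ hy
      _ = slope f y₂ x₁ := slope_comm _ _ _
      _ ≤ slope f y₂ x₂ := hf.slope_mono hy₂ ⟨hx₁, h⟩ ⟨hx₂, h₂⟩ hx
      _ = slope f x₂ y₂ := slope_comm _ _ _
  · have hy₁x₂ : y₁ ≠ x₂ := ((lt_of_le_of_ne hy h₁.symm).trans_le hx).ne
    calc slope f x₁ y₁ = slope f y₁ x₁ := slope_comm _ _ _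
      _ ≤ slope f y₁ x₂ := hf.slope_mono hy₁ ⟨hx₁, h₁⟩ ⟨hx₂, hy₁x₂.symm⟩ hx
      _ = slope f x₂ y₁ := slope_comm _ _ _
      _ ≤ slope f x₂ x₁ := hf.slope_mono hx₂ ⟨hy₁, hy₁x₂⟩ ⟨hx₁, h₂.symm⟩ hy

lemma mul_sum_range_le_sum_range_mul {g d : ℕ → ℝ} (hg : Antitone g) {N : ℕ}
    (hd : ∀ k ≤ N, 0 ≤ ∑ i ∈ range k, d i) :
    g N * ∑ i ∈ range N, d i ≤ ∑ i ∈ range N, g i * d i := by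
  induction N with
  | zero => simp
  | succ N ih =>
    calc g (N + 1) * ∑ i ∈ range (N + 1), d i ≤ g N * ∑ i ∈ range (N + 1), d i :=
          mul_le_mul_of_nonneg_right (hg N.le_succ) (hd _ le_rfl)
      _ = g N * ∑ i ∈ range N, d i + g N * d N := by rw [sum_range_succ, mul_add]
      _ ≤ ∑ i ∈ range (N + 1), g i * d i := by
          rw [sum_range_succ]
          gcongr
          exact ih fun k hk ↦ hd k (hk.trans N.le_succ)

/-- Karamata's inequality for nonincreasing sequences. -/
theorem sum_range_le_sum_range_of_convexOn {s : Set ℝ} {f : ℝ → ℝ} (hf : ConvexOn ℝ s f)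
    {a b : ℕ → ℝ} {N : ℕ} (ha : AntitoneOn a (Set.Iio N)) (hb : AntitoneOn b (Set.Iio N))
    (has : ∀ k < N, a k ∈ s) (hbs : ∀ k < N, b k ∈ s)
    (hle : ∀ k ≤ N, ∑ i ∈ range k, a i ≤ ∑ i ∈ range k, b i)
    (heq : ∑ i ∈ range N, a i = ∑ i ∈ range N, b i) :
    ∑ i ∈ range N, f (a i) ≤ ∑ i ∈ range N, f (b i) := by
  set T : Set ℕ := {k | k < N ∧ a k ≠ b k}
  have hT : T.Finite := (Set.finite_Iio N).subset fun k hk ↦ hk.1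
  have hslope : AntitoneOn (fun k ↦ slope f (a k) (b k)) T := fun i hi j hj hij ↦
    hf.slope_le_slope (has j hj.1) (hbs j hj.1) (has i hi.1) (hbs i hi.1)
      (ha hi.1 hj.1 hij) (hb hi.1 hj.1 hij) hj.2 hi.2
  obtain ⟨g, hg, hgT⟩ := hslope.exists_antitone_extension (hT.image _).bddBelow
    (hT.image _).bddAbove
  -- on ties both sides vanish, elsewhere `g` is the slope of the secant
  have hterm : ∀ k < N, f (b k) - f (a k) = g k * (b k - a k) := by
    intro k hk
    rcases eq_or_ne (a k) (b k) with h | h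
    · simp [h]
    · rw [← hgT ⟨hk, h⟩, mul_comm, ← smul_eq_mul, sub_smul_slope, vsub_eq_sub]
  have habel := mul_sum_range_le_sum_range_mul hg (d := fun i ↦ b i - a i) fun k hk ↦ by
    simpa [sum_sub_distrib] using hle k hk
  rw [sum_sub_distrib, heq, sub_self, mul_zero,
    ← sum_congr rfl fun k hk ↦ hterm k (mem_range.1 hk), sum_sub_distrib] at habel
  linarith

section Rearrangement

variable [Fintype ι]

lemma dsupp_eq_card_filter (x : ι → ℝ) : dsupp x = #(univ.filter (x · ≠ 0)) := by
  classical
  rw [dsupp, Nat.card_eq_fintype_card, Fintype.card_subtype]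
  congr 1
  ext
  simp

lemma dsupp_le_card (x : ι → ℝ) : dsupp x ≤ Fintype.card ι := by
  rw [dsupp_eq_card_filter]
  exact card_le_univ _

def IsDecreasingRearrangement (x : ι → ℝ) (a : ℕ → ℝ) : Prop :=
  AntitoneOn a (Set.Iio (Fintype.card ι)) ∧
    ∃ π : ι ≃ Fin (Fintype.card ι), ∀ i, a (π i) = x i

lemma exists_isDecreasingRearrangement (x : ι → ℝ) : ∃ a, IsDecreasingRearrangement x a := by
  set v := x ∘ (Fintype.equivFin ι).symm
  set σ := Tuple.sort (OrderDual.toDual ∘ v)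
  have hσ : Antitone (v ∘ σ) := Tuple.monotone_sort (OrderDual.toDual ∘ v)
  refine ⟨fun k ↦ if h : k < Fintype.card ι then v (σ ⟨k, h⟩) else 0, ?_,
    (Fintype.equivFin ι).trans σ.symm, fun i ↦ ?_⟩
  · intro i hi j hj hij
    simp only [dif_pos (Set.mem_Iio.1 hi), dif_pos (Set.mem_Iio.1 hj)]
    exact hσ (Fin.mk_le_mk.2 hij)
  · simp [v]

namespace IsDecreasingRearrangement

variable {x : ι → ℝ} {a : ℕ → ℝ}

lemma exists_apply_eq (ha : IsDecreasingRearrangement x a) {k : ℕ}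
    (hk : k < Fintype.card ι) : ∃ i, a k = x i := by
  obtain ⟨π, hπ⟩ := ha.2
  exact ⟨π.symm ⟨k, hk⟩, by rw [← hπ, Equiv.apply_symm_apply]⟩

lemma sum_comp {M : Type*} [AddCommMonoid M] (ha : IsDecreasingRearrangement x a) (f : ℝ → M) :
    ∑ k ∈ range (Fintype.card ι), f (a k) = ∑ i, f (x i) := by
  obtain ⟨π, hπ⟩ := ha.2
  rw [sum_range, ← π.sum_comp]
  simp only [hπ]

lemma sum_range_eq (ha : IsDecreasingRearrangement x a) :
    ∑ k ∈ range (Fintype.card ι), a k = ∑ i, x i :=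
  ha.sum_comp id

lemma exists_positions (ha : IsDecreasingRearrangement x a) (s : Finset ι) :
    ∃ t ⊆ range (Fintype.card ι), #t = #s ∧ ∑ k ∈ t, a k = ∑ i ∈ s, x i := by
  obtain ⟨π, hπ⟩ := ha.2
  refine ⟨(s.map π.toEmbedding).map Fin.valEmbedding, fun k hk ↦ ?_, by simp, by simp [hπ]⟩
  obtain ⟨j, -, rfl⟩ := mem_map.1 hk
  exact mem_range.2 j.2

lemma eSum_eq (ha : IsDecreasingRearrangement x a) {l : ℕ} (hl : l ≤ Fintype.card ι) :
    eSum x l = ∑ k ∈ range l, a k := by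
  obtain ⟨π, hπ⟩ := ha.2
  refine IsGreatest.csSup_eq ⟨⟨univ.map ((Fin.castLEEmb hl).trans π.symm.toEmbedding),
    by simp, ?_⟩, ?_⟩
  · rw [sum_map, sum_range]
    refine sum_congr rfl fun j _ ↦ ?_
    rw [← hπ]
    simp
  · rintro r ⟨s, rfl, rfl⟩
    obtain ⟨t, ht, hcard, hsum⟩ := ha.exists_positions s
    rw [← hsum, ← hcard]
    exact sum_le_sum_range_card_of_antitoneOn ha.1 ht

lemma filter_ne_zero (ha : IsDecreasingRearrangement x a) (hx : ∀ i, 0 ≤ x i) :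
    (range (Fintype.card ι)).filter (a · ≠ 0) = range (dsupp x) := by
  have hcard : #((range (Fintype.card ι)).filter (a · ≠ 0)) = dsupp x := by
    rw [card_filter, ha.sum_comp (fun t ↦ if t ≠ 0 then 1 else 0), ← card_filter,
      dsupp_eq_card_filter]
  rw [← hcard]
  refine eq_range_card_of_forall_le_mem fun k hk j hjk ↦ ?_
  simp only [mem_filter, mem_range] at hk ⊢
  obtain ⟨i, hi⟩ := ha.exists_apply_eq hk.1
  have hj : j < Fintype.card ι := hjk.trans_lt hk.1
  refine ⟨hj, (lt_of_lt_of_le ((hx i).trans_eq hi.symm |>.lt_of_ne' hk.2) ?_).ne'⟩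
  exact ha.1 hj hk.1 hjk

lemma pos_of_lt_dsupp (ha : IsDecreasingRearrangement x a) (hx : ∀ i, 0 ≤ x i) {k : ℕ}
    (hk : k < dsupp x) : 0 < a k := by
  obtain ⟨hkN, hk0⟩ := mem_filter.1 ((ha.filter_ne_zero hx).symm ▸ mem_range.2 hk)
  obtain ⟨i, hi⟩ := ha.exists_apply_eq (mem_range.1 hkN)
  exact (hi ▸ hx i).lt_of_ne' hk0

lemma sum_ite_eq_sum_range_dsupp {M : Type*} [AddCommMonoid M]
    (ha : IsDecreasingRearrangement x a) (hx : ∀ i, 0 ≤ x i) (f : ℝ → M) :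
    ∑ i, (if x i = 0 then 0 else f (x i)) = ∑ k ∈ range (dsupp x), f (a k) := by
  rw [← ha.filter_ne_zero hx, sum_filter, ← ha.sum_comp (fun t ↦ if t = 0 then 0 else f t)]
  simp only [ite_not]

lemma sum_range_dsupp (ha : IsDecreasingRearrangement x a) (hx : ∀ i, 0 ≤ x i) :
    ∑ k ∈ range (dsupp x), a k = ∑ i, x i := by
  refine (ha.sum_ite_eq_sum_range_dsupp hx id).symm.trans (sum_congr rfl fun i _ ↦ ?_)
  split_ifs with h <;> simp [h]

end IsDecreasingRearrangement

end Rearrangement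

lemma convexOn_rpow_of_neg {p : ℝ} (hp : p < 0) : ConvexOn ℝ (Set.Ioi 0) fun t : ℝ ↦ t ^ p := by
  have himage : Real.log '' Set.Ioi 0 = Set.univ :=
    Set.eq_univ_of_forall fun u ↦ ⟨Real.exp u, Real.exp_pos u, Real.log_exp u⟩
  have hexp : ConvexOn ℝ Set.univ fun u : ℝ ↦ Real.exp (p * u) :=
    ⟨convex_univ, fun u _ v _ a b ha hb hab ↦ by
      simpa [mul_add, mul_left_comm] using
        convexOn_exp.2 (Set.mem_univ (p * u)) (Set.mem_univ (p * v)) ha hb hab⟩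
  have hanti : Antitone fun u : ℝ ↦ Real.exp (p * u) := fun u v huv ↦
    Real.exp_le_exp.2 (mul_le_mul_of_nonpos_left huv hp.le)
  refine ((himage ▸ hexp).comp_concaveOn strictConcaveOn_log_Ioi.concaveOn
    (hanti.antitoneOn _)).congr fun t ht ↦ ?_
  simp [Real.rpow_def_of_pos ht, mul_comm]

lemma ite_rpow_eq_rpow {α : ℝ} (hα : α ≠ 0) (t : ℝ) : (if t = 0 then 0 else t ^ α) = t ^ α := by
  split_ifs with h
  · rw [h, Real.zero_rpow hα]
  · rfl

lemma concaveOn_ite_rpow {α : ℝ} (h₀ : 0 ≤ α) (h₁ : α ≤ 1) :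
    ConcaveOn ℝ (Set.Ici 0) fun t : ℝ ↦ if t = 0 then 0 else t ^ α := by
  rcases h₀.eq_or_lt with rfl | h₀
  · refine ⟨convex_Ici 0, fun x hx y hy a b ha hb hab ↦ ?_⟩
    simp only [Real.rpow_zero, smul_eq_mul]
    by_cases hxy : a * x + b * y = 0
    · obtain ⟨hax, hby⟩ := (add_eq_zero_iff_of_nonneg (mul_nonneg ha hx) (mul_nonneg hb hy)).1 hxy
      rw [if_pos hxy]
      rcases mul_eq_zero.1 hax with rfl | rfl <;> rcases mul_eq_zero.1 hby with rfl | rfl <;> simp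
    · rw [if_neg hxy]
      split_ifs <;> linarith
  · exact (Real.concaveOn_rpow h₀.le h₁).congr fun t _ ↦ (ite_rpow_eq_rpow h₀.ne' t).symm

lemma convexOn_ite_rpow {α : ℝ} (h₁ : 1 ≤ α) :
    ConvexOn ℝ (Set.Ici 0) fun t : ℝ ↦ if t = 0 then 0 else t ^ α :=
  (convexOn_rpow h₁).congr fun t _ ↦ (ite_rpow_eq_rpow (by linarith) t).symm

section Renyi

variable [Fintype ι] [Fintype κ]

noncomputable def powSum (x : ι → ℝ) (α : ℝ) : ℝ := ∑ i, if x i = 0 then 0 else x i ^ α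

lemma renyi_of_ne_one (x : ι → ℝ) {α : ℝ} (hα : α ≠ 1) :
    renyi x α = (if 0 ≤ α then (1 : ℝ) else -1) / (1 - α) * Real.logb 2 (powSum x α) := by
  rw [renyi, if_neg hα, powSum]

lemma renyi_one (x : ι → ℝ) : renyi x 1 = (∑ i, Real.negMulLog (x i)) / Real.log 2 := by
  rw [renyi, if_pos rfl, sum_div, ← sum_neg_distrib]
  refine sum_congr rfl fun i _ ↦ ?_
  rw [Real.negMulLog, Real.logb]
  ring

lemma powSum_zero (x : ι → ℝ) : powSum x 0 = dsupp x := by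
  rw [dsupp_eq_card_filter, natCast_card_filter, powSum]
  simp [ite_not]

lemma renyi_zero (x : ι → ℝ) : renyi x 0 = Real.logb 2 (dsupp x) := by
  rw [renyi_of_ne_one x zero_ne_one, powSum_zero]
  simp

lemma powSum_pos {x : ι → ℝ} (hx : IsProbVec x) (α : ℝ) : 0 < powSum x α := by
  obtain ⟨i, hi⟩ : ∃ i, x i ≠ 0 := by
    by_contra! h
    simpa [h] using hx.2
  refine sum_pos' (fun j _ ↦ ?_) ⟨i, mem_univ _, ?_⟩
  · split_ifs
    exacts [le_rfl, Real.rpow_nonneg (hx.1 j) α]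
  · rw [if_neg hi]
    exact Real.rpow_pos_of_pos ((hx.1 i).lt_of_ne' hi) α

lemma dsupp_pos {x : ι → ℝ} (hx : IsProbVec x) : (0 : ℝ) < dsupp x :=
  powSum_zero x ▸ powSum_pos hx 0

lemma powSum_kron {x : ι → ℝ} {c : κ → ℝ} (hx : ∀ i, 0 ≤ x i) (hc : ∀ j, 0 ≤ c j) (α : ℝ) :
    powSum (kron x c) α = powSum x α * powSum c α := by
  rw [powSum, powSum, powSum, Fintype.sum_prod_type, sum_mul_sum]
  refine sum_congr rfl fun i _ ↦ sum_congr rfl fun j _ ↦ ?_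
  by_cases hxi : x i = 0
  · simp [kron, hxi]
  by_cases hcj : c j = 0
  · simp [kron, hcj]
  simp [kron, hxi, hcj, Real.mul_rpow (hx i) (hc j)]

lemma sum_negMulLog_kron {x : ι → ℝ} {c : κ → ℝ} (hx : IsProbVec x) (hc : IsProbVec c) :
    ∑ p, Real.negMulLog (kron x c p) = ∑ i, Real.negMulLog (x i) + ∑ j, Real.negMulLog (c j) := by
  simp [Fintype.sum_prod_type, kron, Real.negMulLog_mul, sum_add_distrib, ← sum_mul, ← mul_sum,
    hx.2, hc.2]

lemma IsProbVec.kron {x : ι → ℝ} {c : κ → ℝ} (hx : IsProbVec x) (hc : IsProbVec c) :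
    IsProbVec (kron x c) :=
  ⟨fun p ↦ mul_nonneg (hx.1 p.1) (hc.1 p.2), by
    rw [Fintype.sum_prod_type]
    simp [_root_.kron, ← mul_sum, hc.2, hx.2]⟩

lemma renyi_kron {x : ι → ℝ} {c : κ → ℝ} (hx : IsProbVec x) (hc : IsProbVec c) (α : ℝ) :
    renyi (kron x c) α = renyi x α + renyi c α := by
  rcases eq_or_ne α 1 with rfl | hα
  · rw [renyi_one, renyi_one, renyi_one, sum_negMulLog_kron hx hc, add_div]
  · rw [renyi_of_ne_one _ hα, renyi_of_ne_one _ hα, renyi_of_ne_one _ hα, powSum_kron hx.1 hc.1,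
      Real.logb_mul (powSum_pos hx α).ne' (powSum_pos hc α).ne', mul_add]

lemma dsupp_kron (x : ι → ℝ) (c : κ → ℝ) : dsupp (kron x c) = dsupp x * dsupp c := by
  rw [dsupp_eq_card_filter, dsupp_eq_card_filter, dsupp_eq_card_filter, ← card_product]
  congr 1
  ext
  simp [kron]

end Renyi

namespace Maj

variable [Fintype ι] {X Y : ι → ℝ} {a b : ℕ → ℝ}

lemma sum_range_le (hm : Maj X Y) (ha : IsDecreasingRearrangement X a)
    (hb : IsDecreasingRearrangement Y b) {k : ℕ} (hk : k ≤ Fintype.card ι) :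
    ∑ i ∈ range k, a i ≤ ∑ i ∈ range k, b i := by
  rcases Nat.eq_zero_or_pos k with rfl | hk₀
  · simp
  rcases hk.lt_or_eq with hk | rfl
  · rw [← ha.eSum_eq hk.le, ← hb.eSum_eq hk.le]
    exact hm.1 k hk₀ hk
  · rw [ha.sum_range_eq, hb.sum_range_eq]
    exact hm.2.le

theorem sum_le_sum_of_convexOn (hm : Maj X Y) {s : Set ℝ} {f : ℝ → ℝ} (hf : ConvexOn ℝ s f)
    (hX : ∀ i, X i ∈ s) (hY : ∀ i, Y i ∈ s) : ∑ i, f (X i) ≤ ∑ i, f (Y i) := by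
  obtain ⟨a, ha⟩ := exists_isDecreasingRearrangement X
  obtain ⟨b, hb⟩ := exists_isDecreasingRearrangement Y
  rw [← ha.sum_comp, ← hb.sum_comp]
  refine sum_range_le_sum_range_of_convexOn hf ha.1 hb.1 (fun k hk ↦ ?_) (fun k hk ↦ ?_)
    (fun k hk ↦ hm.sum_range_le ha hb hk) (by rw [ha.sum_range_eq, hb.sum_range_eq, hm.2])
  · obtain ⟨i, hi⟩ := ha.exists_apply_eq hk
    exact hi ▸ hX i
  · obtain ⟨i, hi⟩ := hb.exists_apply_eq hk
    exact hi ▸ hY i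

theorem sum_le_sum_of_concaveOn (hm : Maj X Y) {s : Set ℝ} {f : ℝ → ℝ} (hf : ConcaveOn ℝ s f)
    (hX : ∀ i, X i ∈ s) (hY : ∀ i, Y i ∈ s) : ∑ i, f (Y i) ≤ ∑ i, f (X i) := by
  simpa using hm.sum_le_sum_of_convexOn hf.neg hX hY

theorem sum_ite_le_sum_ite_of_convexOn (hm : Maj X Y) (hX : ∀ i, 0 ≤ X i) (hY : ∀ i, 0 ≤ Y i)
    (hd : dsupp X = dsupp Y) {f : ℝ → ℝ} (hf : ConvexOn ℝ (Set.Ioi 0) f) :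
    ∑ i, (if X i = 0 then 0 else f (X i)) ≤ ∑ i, (if Y i = 0 then 0 else f (Y i)) := by
  obtain ⟨a, ha⟩ := exists_isDecreasingRearrangement X
  obtain ⟨b, hb⟩ := exists_isDecreasingRearrangement Y
  have hdN := dsupp_le_card X
  rw [ha.sum_ite_eq_sum_range_dsupp hX, hb.sum_ite_eq_sum_range_dsupp hY, ← hd]
  refine sum_range_le_sum_range_of_convexOn hf (ha.1.mono (Set.Iio_subset_Iio hdN))
    (hb.1.mono (Set.Iio_subset_Iio hdN)) (fun k hk ↦ ha.pos_of_lt_dsupp hX hk)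
    (fun k hk ↦ hb.pos_of_lt_dsupp hY (hd ▸ hk))
    (fun k hk ↦ hm.sum_range_le ha hb (hk.trans hdN)) ?_
  rw [ha.sum_range_dsupp hX, hd, hb.sum_range_dsupp hY, hm.2]

theorem renyi_le_of_nonneg (hm : Maj X Y) (hX : IsProbVec X) (hY : IsProbVec Y) {α : ℝ}
    (hα : 0 ≤ α) : renyi Y α ≤ renyi X α := by
  rcases lt_trichotomy α 1 with h₁ | rfl | h₁
  · rw [renyi_of_ne_one _ h₁.ne, renyi_of_ne_one _ h₁.ne, if_pos hα]
    have hcoef : 0 ≤ 1 / (1 - α) := one_div_nonneg.2 (by linarith)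
    exact mul_le_mul_of_nonneg_left (Real.logb_le_logb_of_le one_lt_two (powSum_pos hY α)
      (hm.sum_le_sum_of_concaveOn (concaveOn_ite_rpow hα h₁.le) hX.1 hY.1)) hcoef
  · rw [renyi_one, renyi_one]
    exact div_le_div_of_nonneg_right
      (hm.sum_le_sum_of_concaveOn Real.concaveOn_negMulLog hX.1 hY.1) (Real.log_pos one_lt_two).le
  · rw [renyi_of_ne_one _ h₁.ne', renyi_of_ne_one _ h₁.ne', if_pos hα]
    have hcoef : 1 / (1 - α) ≤ 0 := div_nonpos_of_nonneg_of_nonpos zero_le_one (by linarith)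
    exact mul_le_mul_of_nonpos_left (Real.logb_le_logb_of_le one_lt_two (powSum_pos hX α)
      (hm.sum_le_sum_of_convexOn (convexOn_ite_rpow h₁.le) hX.1 hY.1)) hcoef

theorem renyi_le_of_dsupp_eq (hm : Maj X Y) (hX : IsProbVec X) (hY : IsProbVec Y)
    (hd : dsupp X = dsupp Y) (α : ℝ) : renyi Y α ≤ renyi X α := by
  rcases le_or_gt 0 α with hα | hα
  · exact hm.renyi_le_of_nonneg hX hY hα
  rw [renyi_of_ne_one _ (by linarith), renyi_of_ne_one _ (by linarith), if_neg hα.not_ge]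
  have hcoef : -1 / (1 - α) ≤ 0 := div_nonpos_of_nonpos_of_nonneg (by norm_num) (by linarith)
  exact mul_le_mul_of_nonpos_left (Real.logb_le_logb_of_le one_lt_two (powSum_pos hX α)
    (hm.sum_ite_le_sum_ite_of_convexOn hX.1 hY.1 hd (convexOn_rpow_of_neg hα))) hcoef

end Maj

/-- `T(y) ⊆ R(y)`: if `x ⊗ c ≺ y ⊗ c` for some probability vector `c`, then
the Renyi entropy of `x` is not less than that of `y`. -/
theorem stmt18 {n : ℕ} (x y : Fin n → ℝ) (hx : IsProbVec x) (hy : IsProbVec y)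
    (h : ∃ (m : ℕ) (c : Fin m → ℝ), IsProbVec c ∧ Maj (kron x c) (kron y c)) :
    RenyiGE x y := by
  obtain ⟨m, c, hc, hmaj⟩ := h
  have cancel {α : ℝ} (h : renyi (kron y c) α ≤ renyi (kron x c) α) : renyi y α ≤ renyi x α := by
    rw [renyi_kron hy hc, renyi_kron hx hc] at h
    linarith
  have hge (α : ℝ) (hα : 0 ≤ α) : renyi y α ≤ renyi x α :=
    cancel (hmaj.renyi_le_of_nonneg (hx.kron hc) (hy.kron hc) hα)
  have hd : dsupp y ≤ dsupp x := by
    have h₀ := hge 0 le_rfl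
    rw [renyi_zero, renyi_zero, Real.logb_le_logb one_lt_two (dsupp_pos hy) (dsupp_pos hx)] at h₀
    exact_mod_cast h₀
  rcases hd.lt_or_eq with hlt | heq
  · exact Or.inl ⟨hlt, hge⟩
  · refine Or.inr ⟨heq.symm, fun α ↦ cancel ?_⟩
    refine hmaj.renyi_le_of_dsupp_eq (hx.kron hc) (hy.kron hc) ?_ α
    rw [dsupp_kron, dsupp_kron, heq]
end
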